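/- arXiv:1704.08664 — 5 statements merged into one kernel-verified Lean document; each statement's English description precedes it below -/
import Mathlib

section
/- Let M be an A-submodule of A^p and let M_D be the B-submodule of B^{2p} generated by {h_D : h ∈ M}. Then for any h ∈ A^p, one has h ∈ M if and only if h_D ∈ M_D. -/
/-! Restricting the first half of `B^{2ι}` to the diagonal of `X × X` is semilinear along
`B → A, α ↦ (z ↦ α (z, z))`, sends `h_D` back to `h`, and hence maps `M_D` into `M`. -/

/-- The double of a tuple of functions: `h_D := (h ∘ π₁, h ∘ π₂)`. -/
def double {k X ι : Type} (h : ι → X → k) :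
    (ι → X × X → k) × (ι → X × X → k) :=
  (fun i => h i ∘ Prod.fst, fun i => h i ∘ Prod.snd)

/-- The double of a submodule `M ⊆ A^ι`: the `B`-submodule of `B^{2ι}`
generated by the doubles of elements of `M`, where `A = X → k`, `B = X × X → k`. -/
def doubleSub {k X ι : Type} [CommRing k] (M : Submodule (X → k) (ι → X → k)) :
    Submodule (X × X → k) ((ι → X × X → k) × (ι → X × X → k)) :=
  Submodule.span (X × X → k) (double '' (M : Set (ι → X → k)))

lemma mem_doubleSub {k X ι : Type} [CommRing k] {M : Submodule (X → k) (ι → X → k)}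
    {h : ι → X → k} (hm : h ∈ M) : double h ∈ doubleSub M :=
  Submodule.subset_span ⟨h, hm, rfl⟩

def diagRingHom (k X : Type) [NonAssocSemiring k] : (X × X → k) →+* (X → k) :=
  RingHom.pi fun z => Pi.evalRingHom _ (z, z)

def fstDiag (k X ι : Type) [Semiring k] :
    ((ι → X × X → k) × (ι → X × X → k)) →ₛₗ[diagRingHom k X] (ι → X → k) where
  toFun x i z := x.1 i (z, z)
  map_add' _ _ := rfl
  map_smul' _ _ := rfl

theorem fstDiag_double {k X ι : Type} [Semiring k] (h : ι → X → k) :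
    fstDiag k X ι (double h) = h :=
  rfl

theorem doubleSub_le_comap_fstDiag {k X ι : Type} [CommRing k]
    (M : Submodule (X → k) (ι → X → k)) : doubleSub M ≤ M.comap (fstDiag k X ι) :=
  Submodule.span_le.mpr <| Set.image_subset_iff.mpr fun h hM =>
    Submodule.mem_comap.mpr ((fstDiag_double h).symm ▸ hM)

theorem mem_iff_double_mem {k X : Type} [CommRing k] {p : ℕ}
    (M : Submodule (X → k) (Fin p → X → k)) (h : Fin p → X → k) :
    h ∈ M ↔ double h ∈ doubleSub M :=
  ⟨mem_doubleSub, fun hD => fstDiag_double h ▸ doubleSub_le_comap_fstDiag M hD⟩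
end

section
/- Let M, N be A-submodules of A^p with doubles M_D, N_D ⊆ B^{2p}. Then M ⊆ N if and only if M_D ⊆ N_D; consequently M = N if and only if M_D = N_D. -/
section

variable {k X ι : Type} [CommRing k]

lemma doubleSub_mono {M N : Submodule (X → k) (ι → X → k)} (hMN : M ≤ N) :
    doubleSub M ≤ doubleSub N :=
  Submodule.span_mono (Set.image_mono hMN)

lemma fst_diag_mem_of_mem_doubleSub {N : Submodule (X → k) (ι → X → k)}
    {v : (ι → X × X → k) × (ι → X × X → k)} (hv : v ∈ doubleSub N) :
    (fun i x => v.1 i (x, x)) ∈ N := by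
  induction hv using Submodule.span_induction with
  | mem w hw =>
    obtain ⟨h, hh, rfl⟩ := hw
    exact hh
  | zero => exact N.zero_mem
  | add _ _ _ _ hv hw => exact N.add_mem hv hw
  | smul b _ _ hv => exact N.smul_mem (fun x => b (x, x)) hv

lemma doubleSub_le_doubleSub_iff {M N : Submodule (X → k) (ι → X → k)} :
    doubleSub M ≤ doubleSub N ↔ M ≤ N :=
  ⟨fun hMN _ hh => fst_diag_mem_of_mem_doubleSub (hMN (mem_doubleSub hh)), doubleSub_mono⟩

lemma doubleSub_inj {M N : Submodule (X → k) (ι → X → k)} :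
    doubleSub M = doubleSub N ↔ M = N := by
  simp only [le_antisymm_iff, doubleSub_le_doubleSub_iff]

end

theorem doubleSub_le_iff_and_eq_iff {k X : Type} [CommRing k] {p : ℕ}
    (M N : Submodule (X → k) (Fin p → X → k)) :
    (M ≤ N ↔ doubleSub M ≤ doubleSub N) ∧ (M = N ↔ doubleSub M = doubleSub N) :=
  ⟨doubleSub_le_doubleSub_iff.symm, doubleSub_inj.symm⟩
end

section
/- Let M ⊆ A^p and N ⊆ A^q be A-submodules and φ : M → N an A-module homomorphism. Then there exists a unique B-module homomorphism φ_D : M_D → N_D satisfying φ_D(h_D) = (φ(h))_D for all h ∈ M. -/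
/-! A `B`-linear relation `∑ cᵢ • (hᵢ)_D = 0`, evaluated at the points `(z, w)`, is the same as
the family of `A`-linear relations `∑ cᵢ(·, w) • hᵢ = 0` and `∑ cᵢ(w, ·) • hᵢ = 0` for `w ∈ X`.
These are preserved by `φ`, so every relation among the generators `h_D` of `M_D` also holds
among the `(φ h)_D`, and `h_D ↦ (φ h)_D` extends uniquely to a `B`-linear map on `M_D`. -/

open Finsupp LinearMap Submodule

theorem Finsupp.existsUnique_linearMap_of_ker_linearCombination_le {R V W ι : Type*} [Ring R]
    [AddCommGroup V] [Module R V] [AddCommGroup W] [Module R W] {v : ι → V} (w : ι → W)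
    (hv : span R (Set.range v) = ⊤)
    (hker : ker (linearCombination R v) ≤ ker (linearCombination R w)) :
    ∃! f : V →ₗ[R] W, ∀ i, f (v i) = w i := by
  have hsurj : Function.Surjective (linearCombination R v) := by
    rw [← range_eq_top, range_linearCombination, hv]
  let e := (linearCombination R v).quotKerEquivOfSurjective hsurj
  let f := (ker (linearCombination R v)).liftQ _ hker ∘ₗ e.symm.toLinearMap
  have hf (i : ι) : f (v i) = w i := by
    have he : e.symm (v i) = Submodule.Quotient.mk (Finsupp.single i 1) := by
      rw [LinearEquiv.symm_apply_eq, quotKerEquivOfSurjective_apply_mk,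
        linearCombination_single, one_smul]
    simp [f, he]
  exact ⟨f, hf, fun g hg => ext_on_range hv fun i => (hg i).trans (hf i).symm⟩

theorem Finsupp.ker_linearCombination_le_comp {R V W ι : Type*} [Semiring R] [AddCommMonoid V]
    [Module R V] [AddCommMonoid W] [Module R W] (f : V →ₗ[R] W) (v : ι → V) :
    ker (linearCombination R v) ≤ ker (linearCombination R (f ∘ v)) := by
  rw [linearCombination_linear_comp]
  exact ker_le_ker_comp _ f

theorem Submodule.ker_linearCombination_coe {R V ι : Type*} [Semiring R] [AddCommMonoid V]
    [Module R V] {S : Submodule R V} (v : ι → S) :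
    ker (linearCombination R fun i => (v i : V)) = ker (linearCombination R v) := by
  ext c
  simp only [mem_ker, ← S.coe_eq_zero (x := linearCombination R v c)]
  rw [← S.subtype_apply, apply_linearCombination]
  rfl

section Double

variable {k X ι κ μ : Type} [CommRing k]

theorem fst_linearCombination_double_apply (h : ι → κ → X → k) (c : ι →₀ (X × X → k))
    (j : κ) (z w : X) :
    (linearCombination (X × X → k) (fun i => double (h i)) c).1 j (z, w) =
      linearCombination (X → k) h (c.mapRange (fun α x => α (x, w)) rfl) j z := by
  rw [linearCombination_apply, linearCombination_apply,
    Finsupp.sum_mapRange_index fun i => zero_smul _ (h i)]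
  simp [Finsupp.sum, double, Prod.fst_sum, Finset.sum_apply]

theorem snd_linearCombination_double_apply (h : ι → κ → X → k) (c : ι →₀ (X × X → k))
    (j : κ) (z w : X) :
    (linearCombination (X × X → k) (fun i => double (h i)) c).2 j (z, w) =
      linearCombination (X → k) h (c.mapRange (fun α x => α (z, x)) rfl) j w := by
  rw [linearCombination_apply, linearCombination_apply,
    Finsupp.sum_mapRange_index fun i => zero_smul _ (h i)]
  simp [Finsupp.sum, double, Prod.snd_sum, Finset.sum_apply]

theorem linearCombination_double_eq_zero_iff (h : ι → κ → X → k) (c : ι →₀ (X × X → k)) :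
    linearCombination (X × X → k) (fun i => double (h i)) c = 0 ↔
      ∀ w, linearCombination (X → k) h (c.mapRange (fun α x => α (x, w)) rfl) = 0 ∧
        linearCombination (X → k) h (c.mapRange (fun α x => α (w, x)) rfl) = 0 := by
  constructor
  · intro hc w
    constructor <;> funext j x
    · simpa [fst_linearCombination_double_apply] using congr($hc.1 j (x, w))
    · simpa [snd_linearCombination_double_apply] using congr($hc.2 j (w, x))
  · intro hc
    ext j ⟨z, w⟩
    · simp [fst_linearCombination_double_apply, (hc w).1]
    · simp [snd_linearCombination_double_apply, (hc z).2]

theorem ker_linearCombination_double_le (h : ι → κ → X → k) (g : ι → μ → X → k)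
    (hrel : ker (linearCombination (X → k) h) ≤ ker (linearCombination (X → k) g)) :
    ker (linearCombination (X × X → k) (fun i => double (h i))) ≤
      ker (linearCombination (X × X → k) (fun i => double (g i))) := by
  intro c hc
  rw [mem_ker, linearCombination_double_eq_zero_iff] at hc ⊢
  exact fun w => ⟨hrel (hc w).1, hrel (hc w).2⟩

theorem span_range_double_eq_top (M : Submodule (X → k) (ι → X → k)) :
    span (X × X → k)
      (Set.range fun m : M => (⟨double (m : ι → X → k), mem_doubleSub m.2⟩ : doubleSub M)) =
      ⊤ := by
  have hrange : (Set.range fun m : M => (⟨double (m : ι → X → k), mem_doubleSub m.2⟩ :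
      doubleSub M)) = Subtype.val ⁻¹' (double '' (M : Set (ι → X → k))) := by
    ext x
    simp [Subtype.ext_iff, eq_comm]
  rw [hrange]
  exact span_span_coe_preimage

end Double

theorem exists_unique_double_hom {k X : Type} [CommRing k] {p q : ℕ}
    (M : Submodule (X → k) (Fin p → X → k)) (N : Submodule (X → k) (Fin q → X → k))
    (φ : M →ₗ[X → k] N) :
    ∃! φD : doubleSub M →ₗ[X × X → k] doubleSub N,
      ∀ (h : Fin p → X → k) (hm : h ∈ M),
        φD ⟨double h, mem_doubleSub hm⟩
          = ⟨double (φ ⟨h, hm⟩ : Fin q → X → k), mem_doubleSub (φ ⟨h, hm⟩).2⟩ := by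
  have hrel : ker (linearCombination (X → k) fun m : M => (m : Fin p → X → k)) ≤
      ker (linearCombination (X → k) fun m : M => (φ m : Fin q → X → k)) := by
    rw [ker_linearCombination_coe, ker_linearCombination_coe]
    exact ker_linearCombination_le_comp φ id
  refine (existsUnique_congr fun _ => Subtype.forall).mp <|
    existsUnique_linearMap_of_ker_linearCombination_le
      (fun m : M => (⟨double (φ m : Fin q → X → k), mem_doubleSub (φ m).2⟩ : doubleSub N))
      (span_range_double_eq_top M) ?_
  rw [← ker_linearCombination_coe, ← ker_linearCombination_coe]
  exact ker_linearCombination_double_le _ _ hrel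
end

section
/- Let φ, φ' : M → N be A-module homomorphisms between A-submodules M ⊆ A^p and N ⊆ A^q. Then φ = φ' if and only if φ_D = φ'_D. Moreover (φ + φ')_D = φ_D + φ'_D. -/
section Double

variable {k X ι ι' : Type}

/-- `h` is recovered from `h ∘ π₁` by restricting to the diagonal. -/
lemma double_injective : Function.Injective (double : (ι → X → k) → _) := by
  intro a b hab
  funext i x
  exact congrFun (congrFun (congrArg Prod.fst hab) i) (x, x)

lemma double_add [Add k] (a b : ι → X → k) : double (a + b) = double a + double b := rfl

variable [CommRing k] {M : Submodule (X → k) (ι → X → k)} {N : Submodule (X → k) (ι' → X → k)}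

lemma doubleSub_linearMap_ext {T : Type} [AddCommMonoid T] [Module (X × X → k) T]
    {f g : doubleSub M →ₗ[X × X → k] T}
    (hfg : ∀ (h : ι → X → k) (hm : h ∈ M),
      f ⟨double h, mem_doubleSub hm⟩ = g ⟨double h, mem_doubleSub hm⟩) : f = g := by
  refine LinearMap.ext_on Submodule.span_span_coe_preimage fun x hx => ?_
  obtain ⟨h, hm, hx⟩ := hx
  obtain rfl : x = ⟨double h, mem_doubleSub hm⟩ := Subtype.ext hx.symm
  exact hfg h hm

def IsDoubleHom (φ : M →ₗ[X → k] N) (φD : doubleSub M →ₗ[X × X → k] doubleSub N) : Prop :=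
  ∀ (h : ι → X → k) (hm : h ∈ M),
    φD ⟨double h, mem_doubleSub hm⟩ = ⟨double (φ ⟨h, hm⟩ : ι' → X → k), mem_doubleSub (φ ⟨h, hm⟩).2⟩

namespace IsDoubleHom

variable {φ φ' : M →ₗ[X → k] N} {φD φ'D : doubleSub M →ₗ[X × X → k] doubleSub N}

lemma unique (hφD : IsDoubleHom φ φD) (hφD' : IsDoubleHom φ φ'D) : φD = φ'D :=
  doubleSub_linearMap_ext fun h hm => (hφD h hm).trans (hφD' h hm).symm

lemma eq_of_isDoubleHom (hφD : IsDoubleHom φ φD) (hφ'D : IsDoubleHom φ' φD) : φ = φ' := by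
  ext1 ⟨h, hm⟩
  exact Subtype.ext <| double_injective <| congrArg Subtype.val <| (hφD h hm).symm.trans (hφ'D h hm)

lemma add (hφD : IsDoubleHom φ φD) (hφ'D : IsDoubleHom φ' φ'D) :
    IsDoubleHom (φ + φ') (φD + φ'D) := fun h hm => by
  rw [LinearMap.add_apply, hφD h hm, hφ'D h hm]
  exact Subtype.ext (double_add _ _).symm

end IsDoubleHom

end Double

theorem doubleHom_inj_and_add {k X : Type} [CommRing k] {p q : ℕ}
    (M : Submodule (X → k) (Fin p → X → k)) (N : Submodule (X → k) (Fin q → X → k))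
    (φ φ' : M →ₗ[X → k] N)
    (φD φ'D ψD : doubleSub M →ₗ[X × X → k] doubleSub N)
    (hφD : ∀ (h : Fin p → X → k) (hm : h ∈ M),
      φD ⟨double h, mem_doubleSub hm⟩
        = ⟨double (φ ⟨h, hm⟩ : Fin q → X → k), mem_doubleSub (φ ⟨h, hm⟩).2⟩)
    (hφ'D : ∀ (h : Fin p → X → k) (hm : h ∈ M),
      φ'D ⟨double h, mem_doubleSub hm⟩
        = ⟨double (φ' ⟨h, hm⟩ : Fin q → X → k), mem_doubleSub (φ' ⟨h, hm⟩).2⟩)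
    (hψD : ∀ (h : Fin p → X → k) (hm : h ∈ M),
      ψD ⟨double h, mem_doubleSub hm⟩
        = ⟨double ((φ + φ') ⟨h, hm⟩ : Fin q → X → k), mem_doubleSub ((φ + φ') ⟨h, hm⟩).2⟩) :
    (φ = φ' ↔ φD = φ'D) ∧ ψD = φD + φ'D := by
  have hφ : IsDoubleHom φ φD := hφD
  have hφ' : IsDoubleHom φ' φ'D := hφ'D
  refine ⟨⟨?_, fun hD => (hD ▸ hφ).eq_of_isDoubleHom hφ'⟩, IsDoubleHom.unique hψD (hφ.add hφ')⟩
  rintro rfl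
  exact hφ.unique hφ'
end

section
/- Let M ⊆ A^p be an A-submodule. If the B-module M_D has finite length, then the A-module M has finite length and length_A(M) ≤ length_B(M_D). -/
/-- Module length as the supremum of lengths of strictly ascending chains of submodules. -/
noncomputable def moduleLength (R M : Type) [CommRing R] [AddCommGroup M] [Module R M] :
    WithBot ℕ∞ :=
  Order.krullDim (Submodule R M)

section Double

variable {k X ι : Type} [CommRing k]

def sliceRingHom (y₀ : X) : (X × X → k) →+* (X → k) :=
  RingHom.pi fun x => Pi.evalRingHom _ (x, y₀)

def firstSlice (y₀ : X) :
    (ι → X × X → k) × (ι → X × X → k) →ₛₗ[sliceRingHom (k := k) y₀] (ι → X → k) where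
  toFun w i x := w.1 i (x, y₀)
  map_add' _ _ := rfl
  map_smul' _ _ := rfl

lemma doubleSub_le_comap_firstSlice (y₀ : X) (M : Submodule (X → k) (ι → X → k)) :
    doubleSub M ≤ M.comap (firstSlice y₀) :=
  Submodule.span_le.2 <| by
    rintro _ ⟨h, hh, rfl⟩
    exact hh

lemma double_mem_doubleSub_iff {M : Submodule (X → k) (ι → X → k)} {h : ι → X → k} :
    double h ∈ doubleSub M ↔ h ∈ M := by
  refine ⟨fun hh => ?_, mem_doubleSub⟩
  cases isEmpty_or_nonempty X with
  | inl _ => simpa only [Subsingleton.elim h 0] using M.zero_mem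
  | inr hX =>
    obtain ⟨y₀⟩ := hX
    exact doubleSub_le_comap_firstSlice y₀ M hh

lemma doubleSub_strictMono : StrictMono (doubleSub : Submodule (X → k) (ι → X → k) → _) :=
  strictMono_of_le_iff_le fun _ _ => doubleSub_le_doubleSub_iff.symm

lemma krullDim_Iic_le_krullDim_Iic_doubleSub (M : Submodule (X → k) (ι → X → k)) :
    Order.krullDim (Set.Iic M) ≤ Order.krullDim (Set.Iic (doubleSub M)) :=
  Order.krullDim_le_of_strictMono
    (fun N => ⟨doubleSub N, doubleSub_le_doubleSub_iff.2 N.2⟩)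
    fun _ _ hlt => doubleSub_strictMono hlt

end Double

theorem length_le_length_double {k X : Type} [CommRing k] {p : ℕ}
    (M : Submodule (X → k) (Fin p → X → k))
    (hfin : moduleLength (X × X → k) (doubleSub M) ≠ ⊤) :
    moduleLength (X → k) M ≠ ⊤ ∧
      moduleLength (X → k) M ≤ moduleLength (X × X → k) (doubleSub M) := by
  have hle : moduleLength (X → k) M ≤ moduleLength (X × X → k) (doubleSub M) := by
    rw [moduleLength, moduleLength, Order.krullDim_eq_of_orderIso M.mapIic,
      Order.krullDim_eq_of_orderIso (doubleSub M).mapIic]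
    exact krullDim_Iic_le_krullDim_Iic_doubleSub M
  exact ⟨ne_top_of_le_ne_top hfin hle, hle⟩
end
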